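/- arXiv:1503.01695 — 3 statements merged into one kernel-verified Lean document; each statement's English description precedes it below -/
import Mathlib

section
/- Let n ≥ 2 and 2-n < a < 1. Then for every f ∈ L¹(ℝ^{n-1}) and every λ > 0, the Lebesgue measure of the set {x ∈ ℝⁿ : |P_a f(x)| > λ} is at most 2 c_{n,a}^{1/(n-1)} (‖f‖_{L¹(ℝ^{n-1})}/λ)^{n/(n-1)}; in other words, P_a maps L¹(ℝ^{n-1}) boundedly into weak L^{n/(n-1)}(ℝⁿ) with ‖P_a f‖_{L^{n/(n-1)}_w(ℝⁿ)} ≤ (2^{n-1} c_{n,a})^{1/n} ‖f‖_{L¹(ℝ^{n-1})}. -/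
/-!
The kernel has unit mass on every horizontal hyperplane: for `t ≠ 0`,
`c_{n,a} ∫ |t|^{1-a} (|z|² + t²)^{-(n-a)/2} dz = 1`, which follows by writing
`q^{-s} = Γ(s)⁻¹ ∫₀^∞ u^{s-1} e^{-qu} du` and integrating the resulting Gaussian in `z`.
Hence, by Tonelli and Chebyshev, every slice `{x' | λ ≤ P_a|f|(x', t)}` has measure at most
`‖f‖₁/λ`. Since the kernel is bounded by `|t|^{1-n}`, the slice is empty as soon as
`|t| > t₀ = (c_{n,a} ‖f‖₁/λ)^{1/(n-1)}`, so the level set has measure at most `2 t₀ ‖f‖₁/λ`.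
-/

open MeasureTheory
open scoped ENNReal

/-- The constant `c_{n,a} = π^{-(n-1)/2} Γ((n-a)/2) / Γ((1-a)/2)`. -/
noncomputable def poissonConst (n : ℕ) (a : ℝ) : ℝ :=
  Real.pi ^ (-(((n : ℝ) - 1) / 2)) * Real.Gamma (((n : ℝ) - a) / 2) / Real.Gamma ((1 - a) / 2)

/-- The kernel `|x_n|^{1-a} (|x'-y|² + x_n²)^{-(n-a)/2}`. -/
noncomputable def poissonKernelA (n : ℕ) (a : ℝ) (x : (Fin (n - 1) → ℝ) × ℝ)
    (y : Fin (n - 1) → ℝ) : ℝ :=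
  |x.2| ^ (1 - a) * ((∑ j, (x.1 j - y j) ^ 2) + x.2 ^ 2) ^ (-(((n : ℝ) - a) / 2))

/-- The Poisson transform `P_a f`. -/
noncomputable def poissonTransform (n : ℕ) (a : ℝ) (f : (Fin (n - 1) → ℝ) → ℂ)
    (x : (Fin (n - 1) → ℝ) × ℝ) : ℂ :=
  (poissonConst n a : ℂ) * ∫ y : Fin (n - 1) → ℝ, (poissonKernelA n a x y : ℂ) * f y

open Real Set

lemma lintegral_rpow_mul_exp_neg_mul_Ioi {s r : ℝ} (hs : 0 < s) (hr : 0 < r) :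
    ∫⁻ u in Ioi (0 : ℝ), ENNReal.ofReal (u ^ (s - 1) * exp (-(r * u))) =
      ENNReal.ofReal ((1 / r) ^ s * Gamma s) := by
  have hval := integral_rpow_mul_exp_neg_mul_Ioi hs hr
  have hint : IntegrableOn (fun u : ℝ => u ^ (s - 1) * exp (-(r * u))) (Ioi 0) :=
    Integrable.of_integral_ne_zero (by rw [hval]; positivity)
  rw [← hval, ofReal_integral_eq_lintegral_ofReal hint]
  filter_upwards [ae_restrict_mem measurableSet_Ioi] with u (hu : 0 < u)
  positivity

lemma lintegral_exp_neg_mul_sum_sq (m : ℕ) {u : ℝ} (hu : 0 < u) :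
    ∫⁻ z : Fin m → ℝ, ENNReal.ofReal (exp (-u * ∑ j, z j ^ 2)) =
      ENNReal.ofReal ((π / u) ^ ((m : ℝ) / 2)) := by
  have hprod : ∀ z : Fin m → ℝ, exp (-u * ∑ j, z j ^ 2) = ∏ j, exp (-u * z j ^ 2) := fun z => by
    rw [Finset.mul_sum, exp_sum]
  have hint : Integrable (fun z : Fin m → ℝ => ∏ j, exp (-u * z j ^ 2)) :=
    Integrable.fintype_prod (f := fun _ x => exp (-u * x ^ 2))
      fun _ => integrable_exp_neg_mul_sq hu
  simp_rw [hprod]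
  rw [← ofReal_integral_eq_lintegral_ofReal hint (.of_forall fun z => by positivity),
    volume_pi, integral_fintype_prod_eq_pow (fun x : ℝ => exp (-u * x ^ 2)), integral_gaussian,
    sqrt_eq_rpow, Fintype.card_fin, ← rpow_natCast, ← rpow_mul (by positivity)]
  ring_nf

lemma lintegral_rpow_mul_exp_neg_mul_sum_sq_add (m : ℕ) (s b : ℝ) {u : ℝ} (hu : 0 < u) :
    ∫⁻ z : Fin m → ℝ, ENNReal.ofReal (u ^ (s - 1) * exp (-((∑ j, z j ^ 2 + b) * u))) =
      ENNReal.ofReal (π ^ ((m : ℝ) / 2)) *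
        ENNReal.ofReal (u ^ (s - (m : ℝ) / 2 - 1) * exp (-(b * u))) := by
  have hsplit : ∀ z : Fin m → ℝ, ENNReal.ofReal (u ^ (s - 1) * exp (-((∑ j, z j ^ 2 + b) * u))) =
      ENNReal.ofReal (u ^ (s - 1) * exp (-(b * u))) *
        ENNReal.ofReal (exp (-u * ∑ j, z j ^ 2)) := fun z => by
    rw [← ENNReal.ofReal_mul (by positivity), mul_assoc, ← exp_add]
    ring_nf
  simp_rw [hsplit]
  rw [lintegral_const_mul' _ _ ENNReal.ofReal_ne_top, lintegral_exp_neg_mul_sum_sq m hu,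
    ← ENNReal.ofReal_mul (by positivity), ← ENNReal.ofReal_mul (by positivity)]
  congr 1
  rw [div_rpow pi_pos.le hu.le, sub_right_comm, rpow_sub hu (s - 1)]
  ring

lemma lintegral_sum_sq_add_rpow_neg (m : ℕ) {s b : ℝ}
    (hs : (m : ℝ) / 2 < s) (hb : 0 < b) :
    ∫⁻ z : Fin m → ℝ, ENNReal.ofReal ((∑ j, z j ^ 2 + b) ^ (-s)) =
      ENNReal.ofReal (π ^ ((m : ℝ) / 2) * Gamma (s - (m : ℝ) / 2) /
        Gamma s * b ^ ((m : ℝ) / 2 - s)) := by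
  have hs0 : 0 < s := lt_of_le_of_lt (by positivity) hs
  have hΓ : 0 < Gamma s := Gamma_pos_of_pos hs0
  have hq : ∀ z : Fin m → ℝ, 0 < ∑ j, z j ^ 2 + b := fun z => by positivity
  have hsubord : ∀ z : Fin m → ℝ, ENNReal.ofReal ((∑ j, z j ^ 2 + b) ^ (-s)) =
      (ENNReal.ofReal (Gamma s))⁻¹ * ∫⁻ u in Ioi (0 : ℝ),
        ENNReal.ofReal (u ^ (s - 1) * exp (-((∑ j, z j ^ 2 + b) * u))) := fun z => by
    rw [lintegral_rpow_mul_exp_neg_mul_Ioi hs0 (hq z), one_div, inv_rpow (hq z).le,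
      ← rpow_neg (hq z).le, ENNReal.ofReal_mul (by positivity), ← mul_assoc,
      mul_comm, ← mul_assoc, ENNReal.mul_inv_cancel (by simpa using hΓ) ENNReal.ofReal_ne_top,
      one_mul]
  have hmeas : Measurable (Function.uncurry fun (z : Fin m → ℝ) (u : ℝ) =>
      ENNReal.ofReal (u ^ (s - 1) * exp (-((∑ j, z j ^ 2 + b) * u)))) := by
    fun_prop
  calc ∫⁻ z : Fin m → ℝ, ENNReal.ofReal ((∑ j, z j ^ 2 + b) ^ (-s))
      = (ENNReal.ofReal (Gamma s))⁻¹ * ∫⁻ u in Ioi (0 : ℝ), ∫⁻ z : Fin m → ℝ,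
          ENNReal.ofReal (u ^ (s - 1) * exp (-((∑ j, z j ^ 2 + b) * u))) := by
        simp_rw [hsubord]
        rw [lintegral_const_mul' _ _ (by simpa using hΓ),
          lintegral_lintegral_swap hmeas.aemeasurable]
    _ = (ENNReal.ofReal (Gamma s))⁻¹ * (ENNReal.ofReal (π ^ ((m : ℝ) / 2)) *
          ENNReal.ofReal ((1 / b) ^ (s - (m : ℝ) / 2) * Gamma (s - (m : ℝ) / 2))) := by
        rw [setLIntegral_congr_fun measurableSet_Ioi
            fun u hu => lintegral_rpow_mul_exp_neg_mul_sum_sq_add m s b hu,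
          lintegral_const_mul' _ _ ENNReal.ofReal_ne_top,
          lintegral_rpow_mul_exp_neg_mul_Ioi (by linarith) hb]
    _ = _ := by
        rw [← ENNReal.ofReal_mul (by positivity), ← ENNReal.ofReal_inv_of_pos hΓ,
          ← ENNReal.ofReal_mul (by positivity)]
        congr 1
        rw [one_div, inv_rpow hb.le, ← rpow_neg hb.le, neg_sub]
        field_simp

lemma measure_prod_le_of_slices {X : Type*} [MeasurableSpace X] {μ : Measure X} [SFinite μ]
    {T : Set (X × ℝ)} (hT : MeasurableSet T) {A : ℝ≥0∞} {t₀ : ℝ}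
    (hA : ∀ t, μ ((fun x => (x, t)) ⁻¹' T) ≤ A)
    (hzero : ∀ t, t₀ < |t| → μ ((fun x => (x, t)) ⁻¹' T) = 0) :
    μ.prod volume T ≤ A * ENNReal.ofReal (2 * t₀) := by
  rw [Measure.prod_apply_symm hT]
  calc ∫⁻ t, μ ((fun x => (x, t)) ⁻¹' T)
      ≤ ∫⁻ t, (Icc (-t₀) t₀).indicator (fun _ => A) t := by
        refine lintegral_mono fun t => ?_
        by_cases ht : t ∈ Icc (-t₀) t₀
        · simpa only [indicator_of_mem ht] using hA t
        · rw [indicator_of_notMem ht, hzero t (lt_of_not_ge fun h => ht (abs_le.mp h))]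
    _ = A * ENNReal.ofReal (2 * t₀) := by
        rw [lintegral_indicator_const measurableSet_Icc, Real.volume_Icc]
        ring_nf

lemma measure_le_of_slice_lintegral_le {X : Type*} [MeasurableSpace X] {μ : Measure X} [SFinite μ]
    {φ : X × ℝ → ℝ≥0∞} (hφ : Measurable φ) {C N ν lam : ℝ} (hC : 0 ≤ C) (hN : 0 ≤ N)
    (hν : 0 < ν) (hlam : 0 < lam)
    (hslice : ∀ t, ∫⁻ x, φ (x, t) ∂μ ≤ ENNReal.ofReal N)
    (hdecay : ∀ x t, t ≠ 0 → φ (x, t) ≤ ENNReal.ofReal (C / |t| ^ ν) * ENNReal.ofReal N) :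
    μ.prod volume {p | ENNReal.ofReal lam ≤ φ p} ≤
      ENNReal.ofReal (2 * C ^ (1 / ν) * (N / lam) ^ ((ν + 1) / ν)) := by
  set t₀ := (C * (N / lam)) ^ ν⁻¹ with ht₀
  have ht₀_nonneg : 0 ≤ t₀ := by positivity
  have hmarkov : ∀ t, μ {x | ENNReal.ofReal lam ≤ φ (x, t)} ≤
      ENNReal.ofReal N / ENNReal.ofReal lam := fun t =>
    (meas_ge_le_lintegral_div (hφ.comp (measurable_id.prodMk measurable_const)).aemeasurable
      (by simpa using hlam) ENNReal.ofReal_ne_top).trans (ENNReal.div_le_div_right (hslice t) _)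
  have hempty : ∀ t, t₀ < |t| → {x | ENNReal.ofReal lam ≤ φ (x, t)} = ∅ := by
    intro t ht
    have ht0 : t ≠ 0 := by rintro rfl; simp at ht; linarith
    have hpow : C * (N / lam) < |t| ^ ν := by
      simpa [ht₀, rpow_inv_rpow (by positivity : 0 ≤ C * (N / lam)) hν.ne'] using
        rpow_lt_rpow ht₀_nonneg ht hν
    have hlt : C / |t| ^ ν * N < lam := by
      have : 0 < |t| ^ ν := by positivity
      rw [div_mul_eq_mul_div, div_lt_iff₀ this]
      rw [mul_div_assoc', div_lt_iff₀ hlam] at hpow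
      linarith
    refine eq_empty_iff_forall_notMem.mpr fun x hx => (hx.trans (hdecay x t ht0)).not_gt ?_
    rw [← ENNReal.ofReal_mul (by positivity)]
    exact (ENNReal.ofReal_lt_ofReal_iff hlam).2 hlt
  calc μ.prod volume {p | ENNReal.ofReal lam ≤ φ p}
      ≤ ENNReal.ofReal N / ENNReal.ofReal lam * ENNReal.ofReal (2 * t₀) :=
        measure_prod_le_of_slices (measurableSet_le measurable_const hφ) hmarkov
          fun t ht => by rw [← measure_empty (μ := μ), ← hempty t ht]; rfl
    _ = ENNReal.ofReal (2 * C ^ (1 / ν) * (N / lam) ^ ((ν + 1) / ν)) := by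
        rw [← ENNReal.ofReal_div_of_pos hlam, ← ENNReal.ofReal_mul (by positivity)]
        congr 1
        have hsplit : (ν + 1) / ν = ν⁻¹ + 1 := by field_simp; ring
        rw [ht₀, mul_rpow hC (by positivity), hsplit,
          rpow_add' (by positivity) (by positivity), rpow_one, one_div]
        ring

lemma poissonConst_pos {n : ℕ} {a : ℝ} (ha : a < 1) (han : a < n) : 0 < poissonConst n a := by
  unfold poissonConst
  have := Gamma_pos_of_pos (by linarith : 0 < ((n : ℝ) - a) / 2)
  have := Gamma_pos_of_pos (by linarith : 0 < (1 - a) / 2)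
  positivity

lemma poissonKernelA_nonneg (n : ℕ) (a : ℝ) (x : (Fin (n - 1) → ℝ) × ℝ) (y : Fin (n - 1) → ℝ) :
    0 ≤ poissonKernelA n a x y := by
  unfold poissonKernelA
  positivity

lemma measurable_poissonKernelA (n : ℕ) (a : ℝ) :
    Measurable fun p : ((Fin (n - 1) → ℝ) × ℝ) × (Fin (n - 1) → ℝ) =>
      poissonKernelA n a p.1 p.2 := by
  unfold poissonKernelA
  fun_prop

lemma poissonKernelA_of_height_zero {n : ℕ} {a : ℝ} (ha : a < 1) (x' y : Fin (n - 1) → ℝ) :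
    poissonKernelA n a (x', 0) y = 0 := by
  simp [poissonKernelA, zero_rpow (by linarith : (1 : ℝ) - a ≠ 0)]

lemma poissonKernelA_le {n : ℕ} {a : ℝ} (han : a ≤ n) {t : ℝ} (ht : t ≠ 0)
    (x' y : Fin (n - 1) → ℝ) :
    poissonKernelA n a (x', t) y ≤ (|t| ^ ((n : ℝ) - 1))⁻¹ := by
  have ht' : 0 < |t| := abs_pos.2 ht
  calc poissonKernelA n a (x', t) y
      ≤ |t| ^ (1 - a) * (|t| ^ (2 : ℝ)) ^ (-(((n : ℝ) - a) / 2)) := by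
        rw [rpow_two, sq_abs]
        refine mul_le_mul_of_nonneg_left (rpow_le_rpow_of_nonpos (by positivity) ?_ (by linarith))
          (by positivity)
        simp only [le_add_iff_nonneg_left]
        positivity
    _ = (|t| ^ ((n : ℝ) - 1))⁻¹ := by
        rw [← rpow_mul ht'.le, ← rpow_add ht', ← rpow_neg ht'.le]
        ring_nf

lemma poissonConst_mul_lintegral_poissonKernelA {n : ℕ} (hn : 1 ≤ n) {a : ℝ} (ha : a < 1)
    {t : ℝ} (ht : t ≠ 0) (y : Fin (n - 1) → ℝ) :
    ENNReal.ofReal (poissonConst n a) *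
      ∫⁻ x' : Fin (n - 1) → ℝ, ENNReal.ofReal (poissonKernelA n a (x', t) y) = 1 := by
  have hm : ((n - 1 : ℕ) : ℝ) = n - 1 := by rw [Nat.cast_sub hn, Nat.cast_one]
  have ht' : 0 < |t| := abs_pos.2 ht
  have hshift := lintegral_add_right_eq_self (μ := volume)
    (fun x' : Fin (n - 1) → ℝ => ENNReal.ofReal (poissonKernelA n a (x', t) y)) y
  simp only [poissonKernelA, Pi.add_apply, add_sub_cancel_right] at hshift
  simp only [poissonKernelA]
  rw [← hshift]
  simp_rw [ENNReal.ofReal_mul (by positivity : (0 : ℝ) ≤ |t| ^ (1 - a))]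
  rw [lintegral_const_mul' _ _ ENNReal.ofReal_ne_top,
    lintegral_sum_sq_add_rpow_neg (n - 1) (by rw [hm]; linarith) (by positivity),
    ← ENNReal.ofReal_mul (by positivity),
    ← ENNReal.ofReal_mul (poissonConst_pos ha (by linarith)).le, ← ENNReal.ofReal_one]
  congr 1
  have hΓ := Gamma_pos_of_pos (by linarith : 0 < (1 - a) / 2)
  have hΓ' := Gamma_pos_of_pos (by linarith : 0 < ((n : ℝ) - a) / 2)
  have hpow : |t| ^ (1 - a) * |t| ^ (a - 1) = 1 := by
    rw [← rpow_add ht', show 1 - a + (a - 1) = 0 by ring, rpow_zero]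
  rw [hm, show ((n : ℝ) - a) / 2 - (n - 1) / 2 = (1 - a) / 2 by ring,
    show ((n : ℝ) - 1) / 2 - (n - a) / 2 = (a - 1) / 2 by ring, ← sq_abs, ← rpow_natCast,
    ← rpow_mul ht'.le, show ((2 : ℕ) : ℝ) * ((a - 1) / 2) = a - 1 by push_cast; ring,
    poissonConst, rpow_neg pi_pos.le]
  field_simp
  exact hpow

/-- `P_a` on nonnegative `h` (used with `h = |f|`), valued in `ℝ≥0∞` so that no integrability
is needed and Tonelli applies. -/
noncomputable def poissonMajorant (n : ℕ) (a : ℝ) (h : (Fin (n - 1) → ℝ) → ℝ≥0∞)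
    (x : (Fin (n - 1) → ℝ) × ℝ) : ℝ≥0∞ :=
  ENNReal.ofReal (poissonConst n a) * ∫⁻ y, ENNReal.ofReal (poissonKernelA n a x y) * h y

lemma Complex.enorm_ofReal_of_nonneg {r : ℝ} (hr : 0 ≤ r) : ‖(r : ℂ)‖ₑ = ENNReal.ofReal r := by
  rw [← ofReal_norm, Complex.norm_real, norm_of_nonneg hr]

lemma enorm_poissonTransform_le {n : ℕ} {a : ℝ} (hc : 0 ≤ poissonConst n a)
    (f : (Fin (n - 1) → ℝ) → ℂ) (x : (Fin (n - 1) → ℝ) × ℝ) :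
    ‖poissonTransform n a f x‖ₑ ≤ poissonMajorant n a (fun y => ‖f y‖ₑ) x := by
  rw [poissonTransform, poissonMajorant, enorm_mul, Complex.enorm_ofReal_of_nonneg hc]
  gcongr
  refine (enorm_integral_le_lintegral_enorm _).trans_eq (lintegral_congr fun y => ?_)
  rw [enorm_mul, Complex.enorm_ofReal_of_nonneg (poissonKernelA_nonneg n a x y)]

lemma poissonMajorant_congr_ae {n : ℕ} {a : ℝ} {h g : (Fin (n - 1) → ℝ) → ℝ≥0∞}
    (hhg : h =ᵐ[volume] g) : poissonMajorant n a h = poissonMajorant n a g := by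
  ext x
  rw [poissonMajorant, poissonMajorant, lintegral_congr_ae (hhg.mono fun y hy => by rw [hy])]

lemma measurable_poissonMajorant (n : ℕ) (a : ℝ) {h : (Fin (n - 1) → ℝ) → ℝ≥0∞}
    (hh : Measurable h) : Measurable (poissonMajorant n a h) :=
  (((measurable_poissonKernelA n a).ennreal_ofReal.mul
    (hh.comp measurable_snd)).lintegral_prod_right').const_mul _

lemma lintegral_poissonMajorant_slice_le {n : ℕ} (hn : 1 ≤ n) {a : ℝ} (ha : a < 1)
    {h : (Fin (n - 1) → ℝ) → ℝ≥0∞} (hh : Measurable h) (t : ℝ) :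
    ∫⁻ x' : Fin (n - 1) → ℝ, poissonMajorant n a h (x', t) ≤ ∫⁻ y, h y := by
  rcases eq_or_ne t 0 with rfl | ht
  · simp [poissonMajorant, poissonKernelA_of_height_zero ha]
  have hK : Measurable (Function.uncurry fun (x' y : Fin (n - 1) → ℝ) =>
      ENNReal.ofReal (poissonKernelA n a (x', t) y)) := by
    unfold poissonKernelA
    fun_prop
  refine le_of_eq ?_
  calc ∫⁻ x', poissonMajorant n a h (x', t)
      = ∫⁻ y, (ENNReal.ofReal (poissonConst n a) *
          ∫⁻ x', ENNReal.ofReal (poissonKernelA n a (x', t) y)) * h y := by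
        simp_rw [poissonMajorant, mul_assoc]
        rw [lintegral_const_mul' _ _ ENNReal.ofReal_ne_top, lintegral_lintegral_swap
          (hK.mul (hh.comp measurable_snd)).aemeasurable,
          ← lintegral_const_mul' _ _ ENNReal.ofReal_ne_top]
        refine lintegral_congr fun y => ?_
        rw [lintegral_mul_const _ hK.of_uncurry_right]
    _ = ∫⁻ y, h y := by
        simp_rw [poissonConst_mul_lintegral_poissonKernelA hn ha ht, one_mul]

lemma poissonMajorant_le {n : ℕ} {a : ℝ} (han : a ≤ n) {h : (Fin (n - 1) → ℝ) → ℝ≥0∞}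
    {t : ℝ} (ht : t ≠ 0) (x' : Fin (n - 1) → ℝ) :
    poissonMajorant n a h (x', t) ≤
      ENNReal.ofReal (poissonConst n a / |t| ^ ((n : ℝ) - 1)) * ∫⁻ y, h y := by
  rw [poissonMajorant, div_eq_mul_inv, ENNReal.ofReal_mul' (by positivity), mul_assoc]
  gcongr
  rw [← lintegral_const_mul' _ _ ENNReal.ofReal_ne_top]
  gcongr with y
  exact poissonKernelA_le han ht x' y

theorem statement1_general (n : ℕ) (hn : 2 ≤ n) (a : ℝ) (ha2 : a < 1)
    (f : (Fin (n - 1) → ℝ) → ℂ) (hf : Integrable f volume) (lam : ℝ) (hlam : 0 < lam) :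
    volume {x : (Fin (n - 1) → ℝ) × ℝ | lam < ‖poissonTransform n a f x‖} ≤
      ENNReal.ofReal (2 * poissonConst n a ^ (1 / ((n : ℝ) - 1)) *
        ((∫ y, ‖f y‖) / lam) ^ ((n : ℝ) / ((n : ℝ) - 1))) := by
  have hn' : (2 : ℝ) ≤ n := by exact_mod_cast hn
  have hc := poissonConst_pos ha2 (by linarith : a < n)
  obtain ⟨g, hg, hfg⟩ := hf.aemeasurable.enorm
  have hnorm : ∫⁻ y, g y = ENNReal.ofReal (∫ y, ‖f y‖) := by
    rw [← lintegral_congr_ae hfg, ofReal_integral_norm_eq_lintegral_enorm hf]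
  have hsub : {x | lam < ‖poissonTransform n a f x‖} ⊆
      {x | ENNReal.ofReal lam ≤ poissonMajorant n a g x} := fun x hx => by
    rw [mem_ofPred_eq, ← poissonMajorant_congr_ae hfg]
    exact (ENNReal.ofReal_le_ofReal hx.le).trans
      ((ofReal_norm _).trans_le (enorm_poissonTransform_le hc.le f x))
  refine (measure_mono hsub).trans ?_
  have hweak := measure_le_of_slice_lintegral_le (measurable_poissonMajorant n a hg) hc.le
    (integral_nonneg fun y => norm_nonneg _) (by linarith : (0 : ℝ) < n - 1) hlam
    (fun t => hnorm ▸ lintegral_poissonMajorant_slice_le (by omega) ha2 hg t)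
    (fun x t ht => hnorm ▸ poissonMajorant_le (by linarith) ht x)
  rwa [sub_add_cancel, ← Measure.volume_eq_prod] at hweak

/-- For `n ≥ 2` and `2-n < a < 1`, `P_a` maps `L¹(ℝ^{n-1})` into weak `L^{n/(n-1)}(ℝⁿ)`:
for `f ∈ L¹` and `λ > 0`, the measure of `{|P_a f| > λ}` is at most
`2 c_{n,a}^{1/(n-1)} (‖f‖₁/λ)^{n/(n-1)}`. -/
theorem statement1 (n : ℕ) (hn : 2 ≤ n) (a : ℝ) (ha1 : 2 - (n : ℝ) < a) (ha2 : a < 1)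
    (f : (Fin (n - 1) → ℝ) → ℂ) (hf : Integrable f volume) (lam : ℝ) (hlam : 0 < lam) :
    volume {x : (Fin (n - 1) → ℝ) × ℝ | lam < ‖poissonTransform n a f x‖} ≤
      ENNReal.ofReal (2 * poissonConst n a ^ (1 / ((n : ℝ) - 1)) *
        ((∫ y, ‖f y‖) / lam) ^ ((n : ℝ) / ((n : ℝ) - 1))) :=
  statement1_general n hn a ha2 f hf lam hlam
end

section
/- Let a < 1 and let φ : ℝ → ℂ be twice differentiable with (1+z²) φ''(z) − (a−4) z φ'(z) − (a−2) φ(z) = 0 for all z ∈ ℝ. If moreover ∫_ℝ |φ(z)|² (1+z²)^{(2-a)/2} dz < ∞, then φ(z) = φ(0) (1+z²)^{(a-2)/2} for all z ∈ ℝ. In particular, the solutions of this ODE lying in the weighted L² space L²(ℝ, (1+z²)^{(2-a)/2} dz) form exactly the scalar multiples of z ↦ (1+z²)^{(a-2)/2}. -/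
/-!
The equation is in divergence form: its left side is the derivative of
`(1 + z²) φ' + (2 - a) z φ`, so this quantity is constant, equal to `φ'(0)`. Hence
`g = φ · (1 + z²)^((2-a)/2)` has derivative `φ'(0) (1 + z²)^(-a/2)`, and
`g z = φ(0) + φ'(0) ∫₀ᶻ (1 + t²)^(-a/2)`. The integrability hypothesis reads
`∫ |g|² (1 + z²)^((a-2)/2) < ∞`. If `φ'(0) ≠ 0`, then `|g z| ≳ z^(1-a)` at infinity since `a < 1`,
so the integrand is `≳ z^(2-2a) z^(a-2) = z^(-a)`, which is not integrable at infinity.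
So `φ'(0) = 0` and `g` is constant.
-/

open MeasureTheory Filter Asymptotics intervalIntegral

lemma hasDerivAt_firstIntegral (a : ℝ) {φ φ' φ'' : ℝ → ℂ} {z : ℝ}
    (h1 : HasDerivAt φ (φ' z) z) (h2 : HasDerivAt φ' (φ'' z) z) :
    HasDerivAt (fun z : ℝ => ((1 + z ^ 2 : ℝ) : ℂ) * φ' z + (((2 - a) * z : ℝ) : ℂ) * φ z)
      (((1 + z ^ 2 : ℝ) : ℂ) * φ'' z - (((a - 4) * z : ℝ) : ℂ) * φ' z
        - ((a - 2 : ℝ) : ℂ) * φ z) z := by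
  have hsq : HasDerivAt (fun z : ℝ => ((1 + z ^ 2 : ℝ) : ℂ)) (2 * z) z := by
    simpa using ((hasDerivAt_pow 2 z).const_add 1).ofReal_comp
  have hlin : HasDerivAt (fun z : ℝ => (((2 - a) * z : ℝ) : ℂ)) ((2 - a : ℝ) : ℂ) z := by
    simpa using ((hasDerivAt_id z).const_mul (2 - a)).ofReal_comp
  refine ((hsq.mul h2).add (hlin.mul h1)).congr_deriv ?_
  push_cast
  ring

lemma firstIntegral_eq {a : ℝ} {φ φ' φ'' : ℝ → ℂ}
    (hd1 : ∀ z : ℝ, HasDerivAt φ (φ' z) z) (hd2 : ∀ z : ℝ, HasDerivAt φ' (φ'' z) z)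
    (hode : ∀ z : ℝ, ((1 + z ^ 2 : ℝ) : ℂ) * φ'' z - (((a - 4) * z : ℝ) : ℂ) * φ' z
      - ((a - 2 : ℝ) : ℂ) * φ z = 0) (z : ℝ) :
    ((1 + z ^ 2 : ℝ) : ℂ) * φ' z + (((2 - a) * z : ℝ) : ℂ) * φ z = φ' 0 := by
  have hderiv x := hode x ▸ hasDerivAt_firstIntegral a (hd1 x) (hd2 x)
  simpa using is_const_of_deriv_eq_zero (fun x => (hderiv x).differentiableAt)
    (fun x => (hderiv x).deriv) z 0

lemma hasDerivAt_mul_one_add_sq_rpow {φ : ℝ → ℂ} {φ'z : ℂ} {z : ℝ} (q : ℝ)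
    (h : HasDerivAt φ φ'z z) :
    HasDerivAt (fun z : ℝ => φ z * (((1 + z ^ 2) ^ q : ℝ) : ℂ))
      ((((1 + z ^ 2) ^ (q - 1) : ℝ) : ℂ)
        * (((1 + z ^ 2 : ℝ) : ℂ) * φ'z + ((2 * q * z : ℝ) : ℂ) * φ z)) z := by
  have hpos : 0 < 1 + z ^ 2 := by positivity
  have hw :=
    (((hasDerivAt_pow 2 z).const_add 1).rpow_const (p := q) (Or.inl hpos.ne')).ofReal_comp
  refine (h.mul hw).congr_deriv ?_
  have hsplit : (1 + z ^ 2) ^ q = (1 + z ^ 2) ^ (q - 1) * (1 + z ^ 2) := by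
    rw [← Real.rpow_add_one hpos.ne', sub_add_cancel]
  rw [hsplit]
  push_cast
  ring

lemma eq_add_mul_integral_of_hasDerivAt {g : ℝ → ℂ} {h : ℝ → ℝ} {c : ℂ} (hh : Continuous h)
    (hg : ∀ z, HasDerivAt g (c * h z) z) (z : ℝ) :
    g z = g 0 + c * ((∫ t in (0 : ℝ)..z, h t : ℝ) : ℂ) := by
  rw [← intervalIntegral.integral_ofReal, ← intervalIntegral.integral_const_mul,
    integral_eq_sub_of_hasDerivAt (fun x _ => hg x)
      ((continuous_const.mul (Complex.continuous_ofReal.comp hh)).intervalIntegrable _ _)]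
  ring

lemma norm_sq_mul_rpow_eq {x : ℝ} (hx : 0 < x) (u : ℂ) (r : ℝ) :
    ‖u‖ ^ 2 * x ^ r = ‖u * ((x ^ r : ℝ) : ℂ)‖ ^ 2 * x ^ (-r) := by
  rw [norm_mul, Complex.norm_real, Real.norm_of_nonneg (Real.rpow_nonneg hx.le r),
    Real.rpow_neg hx.le]
  have : x ^ r ≠ 0 := (Real.rpow_pos_of_pos hx r).ne'
  field_simp

lemma continuous_one_add_sq_rpow (p : ℝ) : Continuous fun t : ℝ => (1 + t ^ 2) ^ p :=
  (continuous_const.add (continuous_pow 2)).rpow_const fun t =>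
    Or.inl (by positivity : (0 : ℝ) < 1 + t ^ 2).ne'

lemma isEquivalent_one_add_sq_rpow (p : ℝ) :
    (fun z : ℝ => (1 + z ^ 2) ^ p) ~[atTop] fun z => z ^ (2 * p) := by
  have hsq : (fun z : ℝ => 1 + z ^ 2) ~[atTop] fun z => z ^ 2 :=
    (isLittleO_const_left.2 <| Or.inr <|
      tendsto_norm_atTop_atTop.comp (tendsto_pow_atTop two_ne_zero)).add_isEquivalent
      (IsEquivalent.refl)
  refine (hsq.rpow (fun z => sq_nonneg z)).congr_right ?_
  filter_upwards [eventually_ge_atTop 0] with z hz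
  simp only [Pi.pow_apply]
  rw [← Real.rpow_natCast, ← Real.rpow_mul hz]
  norm_num

lemma isBigO_rpow_integral_one_add_sq_rpow {p : ℝ} (hp : -1 < 2 * p) :
    (fun z : ℝ => z ^ (2 * p + 1)) =O[atTop] fun z => ∫ t in (0 : ℝ)..z, (1 + t ^ 2) ^ p := by
  have hcont := continuous_one_add_sq_rpow p
  obtain ⟨C, hC, hbound⟩ := (isEquivalent_one_add_sq_rpow p).isBigO_symm.exists_pos
  obtain ⟨T, hT⟩ := eventually_atTop.1 (hbound.bound.and (eventually_ge_atTop 0))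
  have hT0 : 0 ≤ T := (hT T le_rfl).2
  have hs : 0 < 2 * p + 1 := by linarith
  have hlower : ∀ z ≥ T, z ^ (2 * p + 1) - T ^ (2 * p + 1)
      ≤ (2 * p + 1) * C * ∫ t in (0 : ℝ)..z, (1 + t ^ 2) ^ p := by
    intro z hz
    have hpow : ∫ t in T..z, t ^ (2 * p) = (z ^ (2 * p + 1) - T ^ (2 * p + 1)) / (2 * p + 1) :=
      integral_rpow (Or.inl hp)
    have hmono : ∫ t in T..z, t ^ (2 * p) ≤ ∫ t in T..z, C * (1 + t ^ 2) ^ p := by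
      refine integral_mono_on hz (intervalIntegral.intervalIntegrable_rpow' hp)
        ((hcont.const_mul C).intervalIntegrable _ _) fun t ht => ?_
      obtain ⟨h, ht0⟩ := hT t ht.1
      simpa [Real.norm_eq_abs, abs_of_nonneg (Real.rpow_nonneg ht0 _),
        abs_of_nonneg (Real.rpow_nonneg (by positivity : (0 : ℝ) ≤ 1 + t ^ 2) _)] using h
    have hsplit := integral_add_adjacent_intervals (hcont.intervalIntegrable (μ := volume) 0 T)
      (hcont.intervalIntegrable T z)
    have hnonneg : 0 ≤ ∫ t in (0 : ℝ)..T, (1 + t ^ 2) ^ p :=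
      integral_nonneg hT0 fun t _ => by positivity
    rw [intervalIntegral.integral_const_mul, hpow, div_le_iff₀ hs] at hmono
    rw [← hsplit]
    nlinarith [mul_nonneg (mul_nonneg hs.le hC.le) hnonneg]
  have hTs : (fun _ : ℝ => T ^ (2 * p + 1)) =o[atTop] fun z : ℝ => z ^ (2 * p + 1) :=
    isLittleO_const_left.2 <| Or.inr <|
      tendsto_norm_atTop_atTop.comp (tendsto_rpow_atTop hs)
  refine hTs.right_isBigO_sub.trans (IsBigO.of_bound ((2 * p + 1) * C) ?_)
  filter_upwards [eventually_ge_atTop T] with z hz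
  have hI : 0 ≤ ∫ t in (0 : ℝ)..z, (1 + t ^ 2) ^ p :=
    integral_nonneg (hT0.trans hz) fun t _ => by positivity
  have hzT : T ^ (2 * p + 1) ≤ z ^ (2 * p + 1) :=
    Real.rpow_le_rpow hT0 hz hs.le
  rw [Real.norm_of_nonneg (sub_nonneg.2 hzT), Real.norm_of_nonneg hI]
  exact hlower z hz

lemma eq_zero_of_integrable_norm_sq_mul_rpow {a : ℝ} (ha : a < 1) (b c : ℂ)
    (hint : Integrable fun z : ℝ =>
      ‖b + c * ((∫ t in (0 : ℝ)..z, (1 + t ^ 2) ^ (-a / 2) : ℝ) : ℂ)‖ ^ 2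
        * (1 + z ^ 2) ^ ((a - 2) / 2)) :
    c = 0 := by
  by_contra hc
  set I : ℝ → ℝ := fun z => ∫ t in (0 : ℝ)..z, (1 + t ^ 2) ^ (-a / 2)
  have hI : (fun z : ℝ => z ^ (1 - a)) =O[atTop] fun z => c * (I z : ℂ) := by
    have := isBigO_rpow_integral_one_add_sq_rpow (p := -a / 2) (by linarith)
    rw [show 2 * (-a / 2) + 1 = 1 - a by ring] at this
    exact this.trans <| (Complex.isBigO_ofReal_right.2 (isBigO_refl _ _)).trans
      (isBigO_self_const_mul hc _ _)
  have hb : (fun _ : ℝ => b) =o[atTop] fun z => c * (I z : ℂ) :=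
    (isLittleO_const_left.2 <| Or.inr <| tendsto_norm_atTop_atTop.comp <|
      tendsto_rpow_atTop (by linarith)).trans_isBigO hI
  have hsq : (fun z : ℝ => (z ^ (1 - a)) ^ 2) =O[atTop] fun z => ‖b + c * (I z : ℂ)‖ ^ 2 :=
    (hI.trans hb.right_isBigO_add).norm_right.pow 2
  have hw : (fun z : ℝ => z ^ (a - 2)) =O[atTop] fun z => (1 + z ^ 2) ^ ((a - 2) / 2) := by
    simpa [mul_div_cancel₀] using (isEquivalent_one_add_sq_rpow ((a - 2) / 2)).isBigO_symm
  have hpow : (fun z : ℝ => (z ^ (1 - a)) ^ 2 * z ^ (a - 2)) =ᶠ[atTop] fun z => z ^ (-a) := by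
    filter_upwards [eventually_gt_atTop 0] with z hz
    rw [← Real.rpow_natCast, ← Real.rpow_mul hz.le, ← Real.rpow_add hz]
    congr 1
    push_cast
    ring
  have hrpow := ((hsq.mul hw).congr' hpow EventuallyEq.rfl).integrableAtFilter
    (measurable_id.pow_const _).aestronglyMeasurable.stronglyMeasurableAtFilter
    (hint.integrableAtFilter atTop)
  rw [integrableAtFilter_rpow_atTop_iff] at hrpow
  linarith

/-- Let `a < 1` and let `φ : ℝ → ℂ` be twice differentiable (with first and second derivatives
`φ'` and `φ''`) satisfying `(1+z²) φ''(z) − (a−4) z φ'(z) − (a−2) φ(z) = 0` for all `z`.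
If moreover `∫ |φ(z)|² (1+z²)^{(2-a)/2} dz < ∞`, then `φ(z) = φ(0) (1+z²)^{(a-2)/2}`
for all `z`; i.e. the solutions of the ODE in the weighted space
`L²(ℝ, (1+z²)^{(2-a)/2} dz)` are exactly the scalar multiples of `z ↦ (1+z²)^{(a-2)/2}`. -/
theorem statement7 (a : ℝ) (ha : a < 1) (φ φ' φ'' : ℝ → ℂ)
    (hd1 : ∀ z : ℝ, HasDerivAt φ (φ' z) z)
    (hd2 : ∀ z : ℝ, HasDerivAt φ' (φ'' z) z)
    (hode : ∀ z : ℝ, ((1 + z ^ 2 : ℝ) : ℂ) * φ'' z - (((a - 4) * z : ℝ) : ℂ) * φ' z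
      - ((a - 2 : ℝ) : ℂ) * φ z = 0)
    (hint : Integrable (fun z : ℝ => ‖φ z‖ ^ 2 * (1 + z ^ 2) ^ ((2 - a) / 2)) volume) :
    ∀ z : ℝ, φ z = φ 0 * (((1 + z ^ 2) ^ ((a - 2) / 2) : ℝ) : ℂ) := by
  have hderiv : ∀ x, HasDerivAt (fun z : ℝ => φ z * (((1 + z ^ 2) ^ ((2 - a) / 2) : ℝ) : ℂ))
      (φ' 0 * (((1 + x ^ 2) ^ (-a / 2) : ℝ) : ℂ)) x := by
    intro x
    have := hasDerivAt_mul_one_add_sq_rpow ((2 - a) / 2) (hd1 x)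
    rwa [show (2 - a) / 2 - 1 = -a / 2 by ring, show 2 * ((2 - a) / 2) * x = (2 - a) * x by ring,
      firstIntegral_eq hd1 hd2 hode x, mul_comm] at this
  have hweighted z : φ z * (((1 + z ^ 2) ^ ((2 - a) / 2) : ℝ) : ℂ)
      = φ 0 + φ' 0 * ((∫ t in (0 : ℝ)..z, (1 + t ^ 2) ^ (-a / 2) : ℝ) : ℂ) := by
    simpa using eq_add_mul_integral_of_hasDerivAt (continuous_one_add_sq_rpow (-a / 2)) hderiv z
  have hc : φ' 0 = 0 := by
    refine eq_zero_of_integrable_norm_sq_mul_rpow ha (φ 0) (φ' 0)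
      (hint.congr (ae_of_all _ fun z => ?_))
    dsimp only
    rw [norm_sq_mul_rpow_eq (by positivity : 0 < 1 + z ^ 2), hweighted z,
      show -((2 - a) / 2) = (a - 2) / 2 by ring]
  intro z
  have hz := hweighted z
  rw [hc, zero_mul, add_zero] at hz
  rw [← hz, mul_assoc, ← Complex.ofReal_mul, ← Real.rpow_add (by positivity),
    show (2 - a) / 2 + (a - 2) / 2 = 0 by ring]
  simp
end

section
/- Let x, y ∈ ℂ with Re(y − x) > 1 and suppose y is not a nonpositive integer. Then the series Σ_{m=0}^∞ (x)_m/(y)_m converges and equals (y−1)/(y−x−1), where (x)_m = x(x+1)⋯(x+m−1) denotes the Pochhammer symbol (rising factorial), with (x)_0 = 1. -/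
/-!
With `w m = (x)_m (y + m - 1) / (y)_m` the terms telescope: `(x)_m / (y)_m * (y - x - 1) =
w m - w (m + 1)`, and `w 0 = y - 1`. Euler's limit formula for `Γ` gives
`(x)_{n+1} / (y)_{n+1} = n ^ (x - y) * GammaSeq y n / GammaSeq x n`, and this Gamma quotient
tends to `Γ(y) / Γ(x)` (`1 / Γ` being entire), so the terms are `O(n ^ Re(x - y))`. Hence the
series converges absolutely and `w n = O(n ^ (Re(x - y) + 1)) → 0`.
-/

open Filter Topology Asymptotics Finset

theorem ascPochhammer_eval_eq_prod_range {R : Type*} [CommSemiring R] (n : ℕ) (r : R) :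
    (ascPochhammer R n).eval r = ∏ j ∈ range n, (r + j) := by
  induction n with
  | zero => simp
  | succ n ih => rw [ascPochhammer_succ_eval, ih, prod_range_succ]

theorem ascPochhammer_eval_ne_zero {R : Type*} [CommRing R] [IsDomain R] {r : R}
    (hr : ∀ m : ℕ, r ≠ -m) (n : ℕ) : (ascPochhammer R n).eval r ≠ 0 := by
  rw [Ne, ascPochhammer_eval_eq_zero_iff]
  rintro ⟨k, -, hk⟩
  exact hr k (by rw [hk, neg_neg])

theorem ascPochhammer_eval_div_mul_eq_sub {y : ℂ} (hy : ∀ m : ℕ, y ≠ -m) (x : ℂ) (n : ℕ) :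
    (ascPochhammer ℂ n).eval x / (ascPochhammer ℂ n).eval y * (y - x - 1) =
      (ascPochhammer ℂ n).eval x * (y + n - 1) / (ascPochhammer ℂ n).eval y -
        (ascPochhammer ℂ (n + 1)).eval x * (y + (n + 1 : ℕ) - 1) /
          (ascPochhammer ℂ (n + 1)).eval y := by
  have hyn : y + n ≠ 0 := fun h0 => hy n (eq_neg_of_add_eq_zero_left h0)
  have hpoch := ascPochhammer_eval_ne_zero hy n
  simp only [ascPochhammer_succ_eval, Nat.cast_succ]
  field_simp
  ring

theorem Summable.hasSum_of_eq_sub_of_tendsto {G : Type*} [AddCommGroup G] [TopologicalSpace G]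
    [IsTopologicalAddGroup G] [T2Space G] {f g : ℕ → G} {L : G} (hf : Summable f)
    (hfg : ∀ n, f n = g n - g (n + 1)) (hg : Tendsto g atTop (𝓝 L)) : HasSum f (g 0 - L) := by
  rw [hf.hasSum_iff_tendsto_nat]
  simp_rw [hfg, sum_range_sub']
  exact tendsto_const_nhds.sub hg

namespace Complex

theorem isBigO_natCast_cpow_rpow (s : ℂ) :
    (fun n : ℕ => (n : ℂ) ^ s) =O[atTop] fun n => (n : ℝ) ^ s.re := by
  refine Eventually.isBigO ?_
  filter_upwards [eventually_ne_atTop 0] with n hn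
  rw [norm_natCast_cpow_of_pos (Nat.pos_of_ne_zero hn)]

theorem isBigO_const_add_natCast (a : ℂ) :
    (fun n : ℕ => a + n) =O[atTop] fun n => (n : ℝ) ^ (1 : ℝ) := by
  simp only [Real.rpow_one]
  refine IsBigO.add (isLittleO_const_left.2 (Or.inr ?_)).isBigO ?_
  · exact tendsto_norm_atTop_atTop.comp tendsto_natCast_atTop_atTop
  · exact Eventually.isBigO (Eventually.of_forall fun n => by simp)

/-- At a pole `s = -m` this holds because `Gamma (-m) = 0` and, by division by zero,
`GammaSeq (-m) n = 0` for `n ≥ m`. -/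
theorem tendsto_GammaSeq_inv (s : ℂ) :
    Tendsto (fun n => (GammaSeq s n)⁻¹) atTop (𝓝 (Gamma s)⁻¹) := by
  obtain ⟨m, rfl⟩ | hs := em (∃ m : ℕ, s = -m)
  swap
  · exact (GammaSeq_tendsto_Gamma s).inv₀ (Gamma_ne_zero (not_exists.1 hs))
  · rw [Gamma_neg_nat_eq_zero, inv_zero]
    refine tendsto_const_nhds.congr' ?_
    filter_upwards [eventually_ge_atTop m] with n hn
    have : ∏ j ∈ range (n + 1), (-(m : ℂ) + j) = 0 :=
      prod_eq_zero (mem_range.2 (Nat.lt_succ_of_le hn)) (neg_add_cancel _)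
    rw [GammaSeq, this, div_zero, inv_zero]

theorem ascPochhammer_eval_div_eq_cpow_mul_GammaSeq (x y : ℂ) {n : ℕ} (hn : n ≠ 0) :
    (ascPochhammer ℂ (n + 1)).eval x / (ascPochhammer ℂ (n + 1)).eval y =
      (n : ℂ) ^ (x - y) * ((GammaSeq x n)⁻¹ * GammaSeq y n) := by
  have hn' : (n : ℂ) ≠ 0 := Nat.cast_ne_zero.2 hn
  have hx : (n : ℂ) ^ x ≠ 0 := by simp [cpow_eq_zero_iff, hn']
  have hy : (n : ℂ) ^ y ≠ 0 := by simp [cpow_eq_zero_iff, hn']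
  simp only [GammaSeq, inv_div, ascPochhammer_eval_eq_prod_range, cpow_sub _ _ hn']
  field_simp
  exact (mul_div_mul_right _ _ (Nat.cast_ne_zero.2 n.factorial_ne_zero)).symm

theorem isBigO_ascPochhammer_eval_div (x y : ℂ) :
    (fun n : ℕ => (ascPochhammer ℂ (n + 1)).eval x / (ascPochhammer ℂ (n + 1)).eval y)
      =O[atTop] fun n => (n : ℝ) ^ (x - y).re := by
  have hbdd := ((tendsto_GammaSeq_inv x).mul (GammaSeq_tendsto_Gamma y)).isBigO_one ℝ
  refine ((isBigO_natCast_cpow_rpow (x - y)).mul hbdd).congr' ?_ (.of_forall fun n => mul_one _)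
  filter_upwards [eventually_ne_atTop 0] with n hn
  exact (ascPochhammer_eval_div_eq_cpow_mul_GammaSeq x y hn).symm

theorem summable_ascPochhammer_eval_div {x y : ℂ} (h : (x - y).re < -1) :
    Summable fun n : ℕ => (ascPochhammer ℂ n).eval x / (ascPochhammer ℂ n).eval y :=
  (summable_nat_add_iff 1).1 <|
    summable_of_isBigO_nat (Real.summable_nat_rpow.2 h) (isBigO_ascPochhammer_eval_div x y)

theorem tendsto_ascPochhammer_eval_mul_div {x y : ℂ} (h : (x - y).re < -1) :
    Tendsto (fun n : ℕ => (ascPochhammer ℂ n).eval x * (y + n - 1) / (ascPochhammer ℂ n).eval y)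
      atTop (𝓝 0) := by
  rw [← tendsto_add_atTop_iff_nat 1]
  have hO := (isBigO_ascPochhammer_eval_div x y).mul_atTop_rpow_natCast_of_isBigO_rpow _ _ _
    (isBigO_const_add_natCast y) le_rfl
  have hlim : Tendsto (fun n : ℕ => (n : ℝ) ^ ((x - y).re + 1)) atTop (𝓝 0) := by
    have := (tendsto_rpow_neg_atTop (by linarith : 0 < -((x - y).re + 1))).comp
      tendsto_natCast_atTop_atTop
    simpa only [neg_neg, Function.comp_def] using this
  refine (hO.trans_tendsto hlim).congr fun n => ?_
  simp only [Pi.mul_apply, Nat.cast_succ]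
  ring

end Complex

/-- For `x, y ∈ ℂ` with `Re(y − x) > 1` and `y` not a nonpositive integer, the series
`Σ_{m=0}^∞ (x)_m/(y)_m` of quotients of Pochhammer symbols (rising factorials)
converges to `(y−1)/(y−x−1)`. -/
theorem statement18 (x y : ℂ) (h : 1 < (y - x).re) (hy : ∀ m : ℕ, y ≠ -(m : ℂ)) :
    HasSum (fun m : ℕ => (ascPochhammer ℂ m).eval x / (ascPochhammer ℂ m).eval y)
      ((y - 1) / (y - x - 1)) := by
  have hre : (x - y).re < -1 := by rw [← neg_sub, Complex.neg_re]; linarith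
  have hd : y - x - 1 ≠ 0 := by
    rw [sub_ne_zero]
    intro h0
    rw [h0, Complex.one_re] at h
    exact lt_irrefl _ h
  rw [← hasSum_mul_right_iff hd, div_mul_cancel₀ _ hd]
  have hsum := (Complex.summable_ascPochhammer_eval_div hre).mul_right (y - x - 1)
  simpa using hsum.hasSum_of_eq_sub_of_tendsto (ascPochhammer_eval_div_mul_eq_sub hy x)
    (Complex.tendsto_ascPochhammer_eval_mul_div hre)
end
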